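/- Let n ≥ 1. There exists a constant C ≥ 1 such that for every ball B = B(c_B, r_B) ⊂ ℝ^n satisfying either (r_B < 1 and |c_B| ≥ 1/r_B) or r_B ≥ 1, one has sup_{x ∈ B} log(e+|x|) ≤ log(e + 1/|B|) + sup_{x ∈ B} log(e+|x|) ≤ C · sup_{x ∈ B} log(e+|x|), where |B| denotes the Lebesgue measure of B. -/

import Mathlib

open MeasureTheory Real
open scoped ENNReal Classical

noncomputable section

/-- `ℝⁿ` as a Euclidean space. -/
abbrev Rn (n : ℕ) := EuclideanSpace ℝ (Fin n)

/-- The Musielak-Orlicz growth function `Φ_p`. -/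
def Phi (n : ℕ) (p : ℝ) (x : Rn n) (t : ℝ) : ℝ :=
  if ∃ k : ℕ, (n : ℝ) * (1 / p - 1) = (k : ℝ) then
    t / (Real.log (Real.exp 1 + t) +
      (t * (1 + ‖x‖) ^ (n : ℝ)) ^ (1 - p) * (Real.log (Real.exp 1 + ‖x‖)) ^ p)
  else
    t / (Real.log (Real.exp 1 + t) + (t * (1 + ‖x‖) ^ (n : ℝ)) ^ (1 - p))

/-- The Orlicz function `φ₀(t) = t / log(e+t)`. -/
def phi0 (t : ℝ) : ℝ := t / Real.log (Real.exp 1 + t)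

/-- The weight `W_p`. -/
def Wp (n : ℕ) (p : ℝ) (x : Rn n) : ℝ :=
  if p = 1 then 1 / Real.log (Real.exp 1 + ‖x‖)
  else if ∃ k : ℕ, (n : ℝ) * (1 / p - 1) = (k : ℝ) then
    (1 + ‖x‖) ^ (-(n : ℝ) * (1 - p)) * (Real.log (Real.exp 1 + ‖x‖)) ^ (-p)
  else (1 + ‖x‖) ^ (-(n : ℝ) * (1 - p))

/-- Extension of `Φ_p(x, ·)` to `ℝ≥0∞`. -/
def PhiE (n : ℕ) (p : ℝ) (x : Rn n) (t : ℝ≥0∞) : ℝ≥0∞ :=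
  if t = ⊤ then ⊤ else ENNReal.ofReal (Phi n p x t.toReal)

/-- Extension of `φ₀` to `ℝ≥0∞`. -/
def phi0E (t : ℝ≥0∞) : ℝ≥0∞ :=
  if t = ⊤ then ⊤ else ENNReal.ofReal (phi0 t.toReal)

/-- The Luxemburg quasi-norm `‖·‖_{L^{Φ_p}}`. -/
def luxPhiNorm (n : ℕ) (p : ℝ) (F : Rn n → ℝ≥0∞) : ℝ≥0∞ :=
  sInf {lam : ℝ≥0∞ | 0 < lam ∧ (∫⁻ x : Rn n, PhiE n p x (F x / lam)) ≤ 1}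

/-- The Luxemburg norm `‖·‖_{L^{φ₀}}`. -/
def luxPhi0Norm (n : ℕ) (F : Rn n → ℝ≥0∞) : ℝ≥0∞ :=
  sInf {lam : ℝ≥0∞ | 0 < lam ∧ (∫⁻ x : Rn n, phi0E (F x / lam)) ≤ 1}

/-- The weighted quasi-norm `‖·‖_{L^p_{W_p}}`. -/
def wNorm (n : ℕ) (p : ℝ) (F : Rn n → ℝ≥0∞) : ℝ≥0∞ :=
  (∫⁻ x : Rn n, F x ^ p * ENNReal.ofReal (Wp n p x)) ^ (1 / p)

/-- The weighted norm `‖·‖_{L^1_{W_1}}`. -/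
def w1Norm (n : ℕ) (F : Rn n → ℝ≥0∞) : ℝ≥0∞ :=
  ∫⁻ x : Rn n, F x * ENNReal.ofReal (Wp n 1 x)

/-- The characteristic function of a set, `ℝ≥0∞`-valued. -/
def chi (n : ℕ) (B : Set (Rn n)) : Rn n → ℝ≥0∞ := B.indicator fun _ => 1

/-!
Write `S = sup_{x ∈ B} log(e + |x|)` and `v = |B(0, 1)|`. Both hypotheses on the ball give
`1/r_B ≤ e + |c_B|`, so `1/|B| = r_B⁻ⁿ / v ≤ (e + |c_B|)ⁿ / v` and
`e + 1/|B| ≤ (e + 1/v) (e + |c_B|)ⁿ`. Taking logarithms,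
`log(e + 1/|B|) ≤ log(e + 1/v) + n log(e + |c_B|) ≤ (log(e + 1/v) + n) S`, as `1 ≤ log(e + |c_B|) ≤ S`.
-/

lemma one_le_log_exp_one_add {a : ℝ} (ha : 0 ≤ a) : 1 ≤ log (exp 1 + a) := by
  rw [le_log_iff_exp_le (by positivity)]
  linarith

lemma one_div_le_exp_one_add {r a : ℝ} (hr : 0 < r) (ha : 0 ≤ a) (h : 1 / r ≤ a ∨ 1 ≤ r) :
    1 / r ≤ exp 1 + a := by
  rcases h with hra | hr1
  · linarith [exp_pos 1]
  · linarith [(div_le_one hr).2 hr1, add_one_le_exp 1]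

lemma exp_one_add_one_div_pow_mul_le {r t v : ℝ} (d : ℕ) (hr : 0 < r) (hv : 0 < v)
    (ht : 1 ≤ t) (hrt : 1 / r ≤ t) :
    exp 1 + 1 / (r ^ d * v) ≤ (exp 1 + 1 / v) * t ^ d := by
  have htd : 1 ≤ t ^ d := one_le_pow₀ ht
  have hinv : 1 / (r ^ d * v) ≤ t ^ d * (1 / v) :=
    calc 1 / (r ^ d * v) = (1 / r) ^ d * (1 / v) := by rw [one_div_pow, one_div_mul_one_div]
      _ ≤ t ^ d * (1 / v) := by gcongr
  nlinarith [exp_pos 1, one_div_pos.2 hv]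

section NormedSpace

variable {E : Type*} [NormedAddCommGroup E]

lemma bddAbove_range_log_exp_one_add_norm_ball (c : E) (r : ℝ) :
    BddAbove (Set.range fun x : Metric.ball c r => log (exp 1 + ‖(x : E)‖)) := by
  refine ⟨log (exp 1 + ‖c‖ + r), ?_⟩
  rintro _ ⟨⟨x, hx⟩, rfl⟩
  have hxc : ‖x‖ ≤ ‖c‖ + r := by
    linarith [norm_le_norm_add_norm_sub' x c, (mem_ball_iff_norm.1 hx).le]
  exact log_le_log (by positivity) (by linarith)

lemma log_exp_one_add_norm_le_iSup_ball (c : E) {r : ℝ} (hr : 0 < r) :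
    log (exp 1 + ‖c‖) ≤ ⨆ x : Metric.ball c r, log (exp 1 + ‖(x : E)‖) :=
  le_ciSup (f := fun x : Metric.ball c r => log (exp 1 + ‖(x : E)‖))
    (bddAbove_range_log_exp_one_add_norm_ball c r) ⟨c, Metric.mem_ball_self hr⟩

variable [NormedSpace ℝ E] [MeasurableSpace E] [BorelSpace E] [FiniteDimensional ℝ E]
  (μ : Measure E) [μ.IsAddHaarMeasure]

lemma log_exp_one_add_one_div_addHaar_ball_le {c : E} {r : ℝ} (hr : 0 < r)
    (hrc : 1 / r ≤ exp 1 + ‖c‖) :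
    log (exp 1 + 1 / (μ (Metric.ball c r)).toReal) ≤
      (log (exp 1 + 1 / (μ (Metric.ball (0 : E) 1)).toReal) + Module.finrank ℝ E) *
        ⨆ x : Metric.ball c r, log (exp 1 + ‖(x : E)‖) := by
  set v := (μ (Metric.ball (0 : E) 1)).toReal
  set S := ⨆ x : Metric.ball c r, log (exp 1 + ‖(x : E)‖)
  set T := log (exp 1 + ‖c‖)
  have hv : 0 < v := ENNReal.toReal_pos (Metric.measure_ball_pos μ 0 one_pos).ne'
    measure_ball_lt_top.ne
  have hvol : (μ (Metric.ball c r)).toReal = r ^ Module.finrank ℝ E * v := by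
    rw [Measure.addHaar_ball_of_pos μ c hr, ENNReal.toReal_mul,
      ENNReal.toReal_ofReal (by positivity)]
  have hT : 1 ≤ T := one_le_log_exp_one_add (norm_nonneg c)
  have hTS : T ≤ S := log_exp_one_add_norm_le_iSup_ball c hr
  have hK : 0 ≤ log (exp 1 + 1 / v) := zero_le_one.trans (one_le_log_exp_one_add (by positivity))
  have hlog : log (exp 1 + 1 / (μ (Metric.ball c r)).toReal) ≤
      log (exp 1 + 1 / v) + Module.finrank ℝ E * T := by
    rw [hvol, ← log_pow, ← log_mul (by positivity) (by positivity)]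
    exact log_le_log (by positivity) <| exp_one_add_one_div_pow_mul_le _ hr hv
      (by linarith [add_one_le_exp 1, norm_nonneg c]) hrc
  calc _ ≤ log (exp 1 + 1 / v) + Module.finrank ℝ E * T := hlog
    _ ≤ (log (exp 1 + 1 / v) + Module.finrank ℝ E) * S := by nlinarith

end NormedSpace

theorem statement18_general (n : ℕ) :
    ∃ C : ℝ, 1 ≤ C ∧ ∀ (c : Rn n) (r : ℝ), 0 < r →
      ((r < 1 ∧ 1 / r ≤ ‖c‖) ∨ 1 ≤ r) →
      (⨆ x : Metric.ball c r, Real.log (Real.exp 1 + ‖(x : Rn n)‖)) ≤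
        Real.log (Real.exp 1 + 1 / (volume (Metric.ball c r)).toReal) +
          (⨆ x : Metric.ball c r, Real.log (Real.exp 1 + ‖(x : Rn n)‖)) ∧
      Real.log (Real.exp 1 + 1 / (volume (Metric.ball c r)).toReal) +
          (⨆ x : Metric.ball c r, Real.log (Real.exp 1 + ‖(x : Rn n)‖)) ≤
        C * ⨆ x : Metric.ball c r, Real.log (Real.exp 1 + ‖(x : Rn n)‖) := by
  set K := log (exp 1 + 1 / (volume (Metric.ball (0 : Rn n) 1)).toReal)
  have hK : 0 ≤ K := zero_le_one.trans (one_le_log_exp_one_add (by positivity))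
  refine ⟨1 + K + n, by linarith [(Nat.cast_nonneg n : (0 : ℝ) ≤ n)], fun c r hr hball => ?_⟩
  have hL : 0 ≤ log (exp 1 + 1 / (volume (Metric.ball c r)).toReal) :=
    zero_le_one.trans (one_le_log_exp_one_add (by positivity))
  have hupper := log_exp_one_add_one_div_addHaar_ball_le volume hr
    (one_div_le_exp_one_add hr (norm_nonneg c) (hball.imp_left And.right))
  rw [finrank_euclideanSpace_fin] at hupper
  exact ⟨by linarith, by linarith⟩

/-- For balls with `r_B < 1 ≤ |c_B| r_B`, or `r_B ≥ 1`,
`log(e + 1/|B|) + sup_{x ∈ B} log(e+|x|) ∼ sup_{x ∈ B} log(e+|x|)`. -/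
theorem statement18 (n : ℕ) (hn : 1 ≤ n) :
    ∃ C : ℝ, 1 ≤ C ∧ ∀ (c : Rn n) (r : ℝ), 0 < r →
      ((r < 1 ∧ 1 / r ≤ ‖c‖) ∨ 1 ≤ r) →
      (⨆ x : Metric.ball c r, Real.log (Real.exp 1 + ‖(x : Rn n)‖)) ≤
        Real.log (Real.exp 1 + 1 / (volume (Metric.ball c r)).toReal) +
          (⨆ x : Metric.ball c r, Real.log (Real.exp 1 + ‖(x : Rn n)‖)) ∧
      Real.log (Real.exp 1 + 1 / (volume (Metric.ball c r)).toReal) +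
          (⨆ x : Metric.ball c r, Real.log (Real.exp 1 + ‖(x : Rn n)‖)) ≤
        C * ⨆ x : Metric.ball c r, Real.log (Real.exp 1 + ‖(x : Rn n)‖) :=
  statement18_general n
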